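/- arXiv:1712.05498 — 5 statements merged into one kernel-verified Lean document; each statement's English description precedes it below -/
import Mathlib

section
/- For every real m×n matrix A there exists a pair of mixed strategies (x⁰, y⁰), with x⁰ in the standard probability simplex of ℝ^m and y⁰ in the standard probability simplex of ℝ^n, such that xᵀ A y⁰ ≤ (x⁰)ᵀ A y⁰ ≤ (x⁰)ᵀ A y for every x in the standard probability simplex of ℝ^m and every y in the standard probability simplex of ℝ^n. -/
/-!
A matrix game is the special case of Sion's minimax theorem in which the payoff `xᵀ A y` is
bilinear, hence continuous and quasilinear in each variable, and both players range over
standard simplices, which are nonempty, convex and compact.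
-/

open Matrix

noncomputable def payoff {m n : ℕ} (A : Matrix (Fin m) (Fin n) ℝ)
    (x : Fin m → ℝ) (y : Fin n → ℝ) : ℝ := x ⬝ᵥ A.mulVec y

section BilinearMinimax

variable {E F : Type*}
  [AddCommGroup E] [Module ℝ E] [TopologicalSpace E] [IsTopologicalAddGroup E]
  [ContinuousSMul ℝ E] [T2Space E] [FiniteDimensional ℝ E]
  [AddCommGroup F] [Module ℝ F] [TopologicalSpace F] [IsTopologicalAddGroup F]
  [ContinuousSMul ℝ F] [T2Space F] [FiniteDimensional ℝ F]

theorem LinearMap.exists_isSaddlePointOn (B : E →ₗ[ℝ] F →ₗ[ℝ] ℝ) {X : Set E} {Y : Set F}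
    (hX : X.Nonempty) (cX : Convex ℝ X) (kX : IsCompact X)
    (hY : Y.Nonempty) (cY : Convex ℝ Y) (kY : IsCompact Y) :
    ∃ a ∈ X, ∃ b ∈ Y, IsSaddlePointOn X Y (fun x y ↦ B x y) a b :=
  Sion.exists_isSaddlePointOn hX cX kX
    (fun y _ ↦
      (B.flip y).continuous_of_finiteDimensional.lowerSemicontinuous.lowerSemicontinuousOn X)
    (fun y _ ↦ ((B.flip y).convexOn cX).quasiconvexOn)
    cY hY kY
    (fun x _ ↦ (B x).continuous_of_finiteDimensional.upperSemicontinuous.upperSemicontinuousOn Y)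
    (fun x _ ↦ ((B x).concaveOn cY).quasiconcaveOn)

end BilinearMinimax

theorem stdSimplex_fin_nonempty (𝕜 : Type*) [Semiring 𝕜] [PartialOrder 𝕜] [ZeroLEOneClass 𝕜]
    {m : ℕ} (hm : 0 < m) : (stdSimplex 𝕜 (Fin m)).Nonempty :=
  ⟨_, single_mem_stdSimplex 𝕜 ⟨0, hm⟩⟩

/-- Von Neumann's minimax theorem: every real matrix game has an optimal
(saddle-point) pair of mixed strategies. -/
theorem matrix_game_has_optimal_pair {m n : ℕ} (hm : 0 < m) (hn : 0 < n)
    (A : Matrix (Fin m) (Fin n) ℝ) :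
    ∃ x0 ∈ stdSimplex ℝ (Fin m), ∃ y0 ∈ stdSimplex ℝ (Fin n),
      (∀ x ∈ stdSimplex ℝ (Fin m), payoff A x y0 ≤ payoff A x0 y0) ∧
      (∀ y ∈ stdSimplex ℝ (Fin n), payoff A x0 y0 ≤ payoff A x0 y) := by
  -- Sion's minimizing player is the column player, so the saddle point comes as `(y0, x0)`.
  obtain ⟨y0, hy0, x0, hx0, hsaddle⟩ := (toLinearMap₂' ℝ A).flip.exists_isSaddlePointOn
    (stdSimplex_fin_nonempty ℝ hn) (convex_stdSimplex ℝ _) (isCompact_stdSimplex ℝ _)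
    (stdSimplex_fin_nonempty ℝ hm) (convex_stdSimplex ℝ _) (isCompact_stdSimplex ℝ _)
  have hpayoff : ∀ y ∈ stdSimplex ℝ (Fin n), ∀ x ∈ stdSimplex ℝ (Fin m),
      payoff A x y0 ≤ payoff A x0 y := by
    simpa only [IsSaddlePointOn, LinearMap.flip_apply, toLinearMap₂'_apply', payoff] using hsaddle
  exact ⟨x0, hx0, y0, hy0, fun x hx ↦ hpayoff y0 hy0 x hx, fun y hy ↦ hpayoff y hy x0 hx0⟩
end

section
/- Let F be a subfield of ℝ and let A be an m×n real matrix all of whose entries lie in F. Then the value val(A) = max_{x ∈ Δ_m} min_{y ∈ Δ_n} xᵀ A y lies in F, and moreover there exists an optimal strategy pair (x⁰, y⁰) for the game A all of whose entries lie in F. -/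
/-!
Sion's minimax theorem gives a saddle point over `ℝ`, i.e. a real solution `(x, y, v)` of the
linear system `x ∈ Δ_m`, `y ∈ Δ_n`, `v ≤ (xᵀA)_j`, `(Ay)_i ≤ v`, and every solution of this system
is an optimal pair with value `v`. All coefficients of the system lie in `F`. Fourier–Motzkin
elimination shows that a finite system of affine inequalities with coefficients in `F` that is
solvable over an ordered field containing `F` is solvable in `F`: eliminating one variable gives
such a system in the remaining variables, and any of its solutions extends, because the admissible
values of the eliminated variable then form a nonempty interval whose finite endpoints lie in `F`.
-/

open Matrix

/-- The value `val(A) = max_{x ∈ Δ_m} min_{y ∈ Δ_n} xᵀ A y` of the matrix game `A`. -/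
noncomputable def matrixVal {m n : ℕ} (A : Matrix (Fin m) (Fin n) ℝ) : ℝ :=
  ⨆ x : stdSimplex ℝ (Fin m), ⨅ y : stdSimplex ℝ (Fin n), payoff A x.1 y.1

section AffineOver

variable {K : Type*} [Field K] (F : Subfield K)

inductive IsAffineOver {σ : Type*} : ((σ → K) → K) → Prop
  | const {d : K} : d ∈ F → IsAffineOver fun _ => d
  | apply (i : σ) : IsAffineOver fun x => x i
  | add {f g : (σ → K) → K} :
      IsAffineOver f → IsAffineOver g → IsAffineOver fun x => f x + g x
  | const_mul {f : (σ → K) → K} {a : K} :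
      a ∈ F → IsAffineOver f → IsAffineOver fun x => a * f x

variable {F} {σ τ : Type*} {f g : (σ → K) → K}

namespace IsAffineOver

theorem mul_const (hf : IsAffineOver F f) {a : K} (ha : a ∈ F) :
    IsAffineOver F fun x => f x * a := by
  simpa only [mul_comm] using hf.const_mul ha

theorem sub (hf : IsAffineOver F f) (hg : IsAffineOver F g) :
    IsAffineOver F fun x => f x - g x := by
  simpa only [neg_one_mul, ← sub_eq_add_neg] using hf.add (hg.const_mul (F.neg_mem F.one_mem))

theorem sum {ι : Type*} {s : Finset ι} {f : ι → (σ → K) → K}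
    (hf : ∀ i ∈ s, IsAffineOver F (f i)) : IsAffineOver F fun x => ∑ i ∈ s, f i x := by
  simpa only [Finset.sum_fn] using
    Finset.sum_induction f (IsAffineOver F) (fun _ _ => add) (const F.zero_mem) hf

theorem comp (hf : IsAffineOver F f) (φ : σ → τ) :
    IsAffineOver F fun x : τ → K => f fun i => x (φ i) := by
  induction hf with
  | const hd => exact const hd
  | apply i => exact apply (φ i)
  | add _ _ ihf ihg => exact ihf.add ihg
  | const_mul ha _ ih => exact ih.const_mul ha

theorem mem (hf : IsAffineOver F f) {x : σ → K} (hx : ∀ i, x i ∈ F) : f x ∈ F := by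
  induction hf with
  | const hd => exact hd
  | apply i => exact hx i
  | add _ _ ihf ihg => exact F.add_mem ihf ihg
  | const_mul ha _ ih => exact F.mul_mem ha ih

theorem exists_eq_mul_add {f : (Option σ → K) → K} (hf : IsAffineOver F f) :
    ∃ a ∈ F, ∃ g : (σ → K) → K, IsAffineOver F g ∧
      ∀ x, f x = a * x none + g fun i => x (some i) := by
  induction hf with
  | const hd => exact ⟨0, F.zero_mem, _, const hd, fun x => by ring⟩
  | apply i =>
    cases i with
    | none => exact ⟨1, F.one_mem, _, const F.zero_mem, fun x => by ring⟩
    | some i => exact ⟨0, F.zero_mem, _, apply i, fun x => by ring⟩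
  | add _ _ ihf ihg =>
    obtain ⟨a, ha, g, hg, hfg⟩ := ihf
    obtain ⟨b, hb, h, hh, hfh⟩ := ihg
    exact ⟨a + b, F.add_mem ha hb, _, hg.add hh, fun x => by simp only [hfg, hfh]; ring⟩
  | const_mul hc _ ih =>
    obtain ⟨a, ha, g, hg, hfg⟩ := ih
    exact ⟨_, F.mul_mem hc ha, _, hg.const_mul hc, fun x => by simp only [hfg]; ring⟩

end IsAffineOver
end AffineOver

section Polyhedral

variable {K : Type*} [Field K] [LE K]

def IsPolyhedralOver (F : Subfield K) {σ : Type*} (P : (σ → K) → Prop) : Prop :=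
  ∃ (ι : Type) (_ : Finite ι) (f : ι → (σ → K) → K),
    (∀ t, IsAffineOver F (f t)) ∧ ∀ x, P x ↔ ∀ t, 0 ≤ f t x

variable {F : Subfield K} {σ : Type*} {P Q : (σ → K) → Prop}

theorem IsPolyhedralOver.and (hP : IsPolyhedralOver F P) (hQ : IsPolyhedralOver F Q) :
    IsPolyhedralOver F fun x => P x ∧ Q x := by
  obtain ⟨ι, _, f, hf, hPf⟩ := hP
  obtain ⟨κ, _, g, hg, hQg⟩ := hQ
  exact ⟨ι ⊕ κ, inferInstance, Sum.elim f g, Sum.forall.mpr ⟨hf, hg⟩,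
    fun x => by simp [hPf, hQg, Sum.forall]⟩

theorem IsPolyhedralOver.forall {κ : Type} [Finite κ] {P : κ → (σ → K) → Prop}
    (hP : ∀ j, IsPolyhedralOver F (P j)) : IsPolyhedralOver F fun x => ∀ j, P j x := by
  choose ι _ f hf hPf using hP
  exact ⟨Σ j, ι j, inferInstance, fun t => f t.1 t.2, fun t => hf t.1 t.2,
    fun x => by simp [hPf, Sigma.forall]⟩

end Polyhedral

section FourierMotzkin

theorem Subfield.exists_mem_upperBounds_lowerBounds {K : Type*} [Field K] [LinearOrder K]
    {F : Subfield K} {s t : Set K} (hs : s.Finite) (ht : t.Finite)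
    (hsF : s ⊆ F) (htF : t ⊆ F) (hst : ∀ a ∈ s, ∀ b ∈ t, a ≤ b) :
    ∃ c ∈ F, c ∈ upperBounds s ∧ c ∈ lowerBounds t := by
  rcases s.eq_empty_or_nonempty with rfl | hs'
  · rcases t.eq_empty_or_nonempty with rfl | ht'
    · exact ⟨0, F.zero_mem, by simp, by simp⟩
    · obtain ⟨b, hb, hbt⟩ := Set.exists_min_image t id ht ht'
      exact ⟨b, htF hb, by simp, hbt⟩
  · obtain ⟨a, ha, has⟩ := Set.exists_max_image s id hs hs'
    exact ⟨a, hsF ha, has, fun b hb => hst a ha b hb⟩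

variable {K : Type*} [Field K] [LinearOrder K] [IsStrictOrderedRing K] {F : Subfield K}

theorem Subfield.exists_mem_forall_nonneg_mul_add {ι : Type*} [Finite ι] {a b : ι → K}
    (ha : ∀ t, a t ∈ F) (hb : ∀ t, b t ∈ F) (hzero : ∀ t, a t = 0 → 0 ≤ b t)
    (hpair : ∀ p q, 0 < a p → a q < 0 → 0 ≤ a p * b q - a q * b p) :
    ∃ c ∈ F, ∀ t, 0 ≤ a t * c + b t := by
  set r : ι → K := fun t => -b t / a t
  have hrF : ∀ t, r t ∈ F := fun t => F.div_mem (F.neg_mem (hb t)) (ha t)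
  obtain ⟨c, hcF, hlow, hupp⟩ := F.exists_mem_upperBounds_lowerBounds
    (s := r '' {p | 0 < a p}) (t := r '' {q | a q < 0}) (Set.toFinite _) (Set.toFinite _)
    (by rintro _ ⟨p, -, rfl⟩; exact hrF p) (by rintro _ ⟨q, -, rfl⟩; exact hrF q)
    (by
      rintro _ ⟨p, hp, rfl⟩ _ ⟨q, hq, rfl⟩
      rw [div_le_iff₀ hp, div_mul_eq_mul_div, le_div_iff_of_neg hq]
      linarith [hpair p q hp hq])
  refine ⟨c, hcF, fun t => ?_⟩
  rcases lt_trichotomy (a t) 0 with ht | ht | ht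
  · have := (le_div_iff_of_neg ht).mp (hupp ⟨t, ht, rfl⟩)
    linarith
  · simpa [ht] using hzero t ht
  · have := (div_le_iff₀ ht).mp (hlow ⟨t, ht, rfl⟩)
    linarith

theorem IsAffineOver.exists_mem_subfield_forall_nonneg {σ : Type*} [Finite σ] {ι : Type}
    [Finite ι] {f : ι → (σ → K) → K} (hf : ∀ t, IsAffineOver F (f t))
    (hsol : ∃ x, ∀ t, 0 ≤ f t x) : ∃ x, (∀ i, x i ∈ F) ∧ ∀ t, 0 ≤ f t x := by
  induction σ using Finite.induction_empty_option generalizing ι with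
  | of_equiv e ih =>
    obtain ⟨x, hx⟩ := hsol
    obtain ⟨y, hyF, hy⟩ := ih (f := fun t y => f t fun i => y (e.symm i))
      (fun t => (hf t).comp e.symm) ⟨fun i => x (e i), by simpa using hx⟩
    exact ⟨fun i => y (e.symm i), fun i => hyF _, hy⟩
  | h_empty =>
    obtain ⟨x, hx⟩ := hsol
    exact ⟨x, fun i => i.elim, hx⟩
  | @h_option σ _ ih =>
    choose a haF g hg hfg using fun t => (hf t).exists_eq_mul_add
    obtain ⟨x, hx⟩ := hsol
    -- Fourier–Motzkin: eliminate `x none` by pairing each lower bound with each upper bound.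
    let f' : {t // a t = 0} ⊕ ({p // 0 < a p} × {q // a q < 0}) → (σ → K) → K :=
      Sum.elim (fun t => g t) fun pq y => a pq.1 * g pq.2 y - a pq.2 * g pq.1 y
    have hf' : ∀ t, IsAffineOver F (f' t) := by
      rintro (t | ⟨p, q⟩)
      · exact hg t
      · exact ((hg q).const_mul (haF p)).sub ((hg p).const_mul (haF q))
    obtain ⟨y, hyF, hy⟩ := ih hf' ⟨fun i => x (some i), by
      rintro (⟨t, ht⟩ | ⟨⟨p, hp⟩, ⟨q, hq⟩⟩)
      · simpa [f', hfg, ht] using hx t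
      · have hp' := mul_nonneg hp.le (hfg q x ▸ hx q)
        have hq' := mul_nonneg (neg_nonneg.mpr hq.le) (hfg p x ▸ hx p)
        simp only [f', Sum.elim_inr]
        linarith⟩
    obtain ⟨c, hcF, hc⟩ := F.exists_mem_forall_nonneg_mul_add haF (fun t => (hg t).mem hyF)
      (fun t ht => by simpa [f', ht] using hy (.inl ⟨t, ht⟩))
      (fun p q hp hq => hy (.inr (⟨p, hp⟩, ⟨q, hq⟩)))
    refine ⟨fun i => i.elim c y, fun i => ?_, fun t => ?_⟩
    · cases i with
      | none => exact hcF
      | some i => exact hyF i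
    · rw [hfg]
      exact hc t

variable {σ : Type*} {P : (σ → K) → Prop}

theorem IsAffineOver.isPolyhedralOver_le {f g : (σ → K) → K} (hf : IsAffineOver F f)
    (hg : IsAffineOver F g) : IsPolyhedralOver F fun x => f x ≤ g x :=
  ⟨Unit, inferInstance, fun _ x => g x - f x, fun _ => hg.sub hf, fun x => by simp⟩

theorem IsAffineOver.isPolyhedralOver_eq {f g : (σ → K) → K} (hf : IsAffineOver F f)
    (hg : IsAffineOver F g) : IsPolyhedralOver F fun x => f x = g x := by
  simpa only [le_antisymm_iff] using (hf.isPolyhedralOver_le hg).and (hg.isPolyhedralOver_le hf)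

theorem isPolyhedralOver_mem_stdSimplex {ι : Type} [Fintype ι] (φ : ι → σ) :
    IsPolyhedralOver F fun x => (fun i => x (φ i)) ∈ stdSimplex K ι :=
  (IsPolyhedralOver.forall fun i => (IsAffineOver.const F.zero_mem).isPolyhedralOver_le
    (.apply (φ i))).and
    ((IsAffineOver.sum fun i _ => .apply (φ i)).isPolyhedralOver_eq (.const F.one_mem))

theorem IsPolyhedralOver.exists_mem_subfield (hP : IsPolyhedralOver F P) [Finite σ]
    (hsol : ∃ x, P x) : ∃ x, (∀ i, x i ∈ F) ∧ P x := by
  obtain ⟨ι, _, f, hf, hPf⟩ := hP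
  simp only [hPf] at hsol ⊢
  exact IsAffineOver.exists_mem_subfield_forall_nonneg hf hsol

end FourierMotzkin

section Simplex

variable {R ι : Type*} [Semiring R] [PartialOrder R] [IsOrderedRing R] [Fintype ι]
  {w c : ι → R} {v : R}

theorem dotProduct_le_of_mem_stdSimplex (hw : w ∈ stdSimplex R ι) (h : ∀ i, c i ≤ v) :
    w ⬝ᵥ c ≤ v :=
  calc w ⬝ᵥ c ≤ ∑ i, w i * v :=
        Finset.sum_le_sum fun i _ => mul_le_mul_of_nonneg_left (h i) (hw.1 i)
    _ = v := by rw [← Finset.sum_mul, hw.2, one_mul]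

theorem le_dotProduct_of_mem_stdSimplex (hw : w ∈ stdSimplex R ι) (h : ∀ i, v ≤ c i) :
    v ≤ w ⬝ᵥ c :=
  calc v = ∑ i, w i * v := by rw [← Finset.sum_mul, hw.2, one_mul]
    _ ≤ w ⬝ᵥ c := Finset.sum_le_sum fun i _ => mul_le_mul_of_nonneg_left (h i) (hw.1 i)

end Simplex

section MatrixGame

variable {m n : ℕ} {A : Matrix (Fin m) (Fin n) ℝ}

theorem payoff_le_of_mulVec_le {x : Fin m → ℝ} {y : Fin n → ℝ} {v : ℝ}
    (hx : x ∈ stdSimplex ℝ (Fin m)) (hy : ∀ i, (A *ᵥ y) i ≤ v) : payoff A x y ≤ v :=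
  dotProduct_le_of_mem_stdSimplex hx hy

theorem le_payoff_of_le_vecMul {x : Fin m → ℝ} {y : Fin n → ℝ} {v : ℝ}
    (hy : y ∈ stdSimplex ℝ (Fin n)) (hx : ∀ j, v ≤ (x ᵥ* A) j) : v ≤ payoff A x y := by
  rw [payoff, dotProduct_mulVec, dotProduct_comm]
  exact le_dotProduct_of_mem_stdSimplex hy hx

theorem payoff_single_right (x : Fin m → ℝ) (j : Fin n) :
    payoff A x (Pi.single j 1) = (x ᵥ* A) j := by
  rw [payoff, dotProduct_mulVec, dotProduct_single, mul_one]

theorem payoff_single_left (y : Fin n → ℝ) (i : Fin m) :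
    payoff A (Pi.single i 1) y = (A *ᵥ y) i := by
  rw [payoff, single_dotProduct, one_mul]

theorem bddBelow_range_payoff (x : Fin m → ℝ) :
    BddBelow (Set.range fun y : stdSimplex ℝ (Fin n) => payoff A x y) := by
  refine BddBelow.mono ?_ ((isCompact_stdSimplex ℝ _).bddBelow_image (f := payoff A x) ?_)
  · rintro _ ⟨y, rfl⟩
    exact ⟨y, y.2, rfl⟩
  · unfold payoff
    fun_prop

theorem matrixVal_eq_payoff {x₀ : Fin m → ℝ} {y₀ : Fin n → ℝ}
    (hx₀ : x₀ ∈ stdSimplex ℝ (Fin m)) (hy₀ : y₀ ∈ stdSimplex ℝ (Fin n))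
    (hmax : ∀ x ∈ stdSimplex ℝ (Fin m), payoff A x y₀ ≤ payoff A x₀ y₀)
    (hmin : ∀ y ∈ stdSimplex ℝ (Fin n), payoff A x₀ y₀ ≤ payoff A x₀ y) :
    matrixVal A = payoff A x₀ y₀ := by
  have : Nonempty (stdSimplex ℝ (Fin m)) := ⟨⟨x₀, hx₀⟩⟩
  have : Nonempty (stdSimplex ℝ (Fin n)) := ⟨⟨y₀, hy₀⟩⟩
  have hinf_le : ∀ x : stdSimplex ℝ (Fin m),
      ⨅ y : stdSimplex ℝ (Fin n), payoff A x y ≤ payoff A x₀ y₀ :=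
    fun x => (ciInf_le (bddBelow_range_payoff x.1) ⟨y₀, hy₀⟩).trans (hmax x x.2)
  exact le_antisymm (ciSup_le hinf_le) <| le_ciSup_of_le ⟨_, Set.forall_mem_range.mpr hinf_le⟩
    ⟨x₀, hx₀⟩ (le_ciInf fun y => hmin y y.2)

theorem exists_optimal_strategies (hm : 0 < m) (hn : 0 < n) :
    ∃ x ∈ stdSimplex ℝ (Fin m), ∃ y ∈ stdSimplex ℝ (Fin n), ∃ v : ℝ,
      (∀ j, v ≤ (x ᵥ* A) j) ∧ ∀ i, (A *ᵥ y) i ≤ v := by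
  have hne : ∀ k, 0 < k → (stdSimplex ℝ (Fin k)).Nonempty := fun k hk =>
    ⟨_, single_mem_stdSimplex ℝ ⟨0, hk⟩⟩
  have hconv : ∀ k, Convex ℝ (stdSimplex ℝ (Fin k)) := fun k => convex_stdSimplex ℝ _
  have hcpt : ∀ k, IsCompact (stdSimplex ℝ (Fin k)) := fun k => isCompact_stdSimplex ℝ _
  obtain ⟨y, hy, x, hx, hsaddle⟩ :=
    Sion.exists_isSaddlePointOn (f := fun y x => toLinearMap₂' ℝ A x y)
      (hne n hn) (hconv n) (hcpt n)
      (fun x _ => Continuous.continuousOn (by simp only [toLinearMap₂'_apply']; fun_prop)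
        |>.lowerSemicontinuousOn)
      (fun x _ => ((toLinearMap₂' ℝ A x).convexOn (hconv n)).quasiconvexOn)
      (hconv m) (hne m hm) (hcpt m)
      (fun y _ => Continuous.continuousOn (by simp only [toLinearMap₂'_apply']; fun_prop)
        |>.upperSemicontinuousOn)
      (fun y _ => (((toLinearMap₂' ℝ A).flip y).concaveOn (hconv m)).quasiconcaveOn)
  simp only [toLinearMap₂'_apply'] at hsaddle
  refine ⟨x, hx, y, hy, payoff A x y, fun j => ?_, fun i => ?_⟩
  · rw [← payoff_single_right]
    exact hsaddle _ (single_mem_stdSimplex ℝ j) x hx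
  · rw [← payoff_single_left]
    exact hsaddle y hy _ (single_mem_stdSimplex ℝ i)

theorem exists_optimal_strategies_mem_subfield (hm : 0 < m) (hn : 0 < n) (F : Subfield ℝ)
    (hA : ∀ i j, A i j ∈ F) :
    ∃ x ∈ stdSimplex ℝ (Fin m), ∃ y ∈ stdSimplex ℝ (Fin n), ∃ v ∈ F,
      (∀ j, v ≤ (x ᵥ* A) j) ∧ (∀ i, (A *ᵥ y) i ≤ v) ∧ (∀ i, x i ∈ F) ∧ ∀ j, y j ∈ F := by
  -- Coordinate `none` carries the value, `some (.inl i)` and `some (.inr j)` the two strategies.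
  let P : (Option (Fin m ⊕ Fin n) → ℝ) → Prop := fun z =>
    ((fun i => z (some (.inl i))) ∈ stdSimplex ℝ (Fin m) ∧
      (fun j => z (some (.inr j))) ∈ stdSimplex ℝ (Fin n)) ∧
    (∀ j, z none ≤ ∑ i, z (some (.inl i)) * A i j) ∧
      ∀ i, ∑ j, A i j * z (some (.inr j)) ≤ z none
  have hP : IsPolyhedralOver F P :=
    ((isPolyhedralOver_mem_stdSimplex _).and (isPolyhedralOver_mem_stdSimplex _)).and
      ((IsPolyhedralOver.forall fun j => (IsAffineOver.apply none).isPolyhedralOver_le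
          (IsAffineOver.sum fun i _ => (IsAffineOver.apply _).mul_const (hA i j))).and
        (IsPolyhedralOver.forall fun i => (IsAffineOver.sum fun j _ =>
          (IsAffineOver.apply _).const_mul (hA i j)).isPolyhedralOver_le (.apply none)))
  obtain ⟨x, hx, y, hy, v, hxv, hyv⟩ := exists_optimal_strategies (A := A) hm hn
  obtain ⟨z, hzF, ⟨hx', hy'⟩, hzx, hzy⟩ :=
    hP.exists_mem_subfield ⟨fun o => o.elim v (Sum.elim x y), ⟨hx, hy⟩, hxv, hyv⟩
  exact ⟨_, hx', _, hy', _, hzF none, hzx, hzy, fun i => hzF _, fun j => hzF _⟩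

end MatrixGame

/-- Weyl's ordered field property: if all entries of a matrix game lie in a subfield `F`
of `ℝ`, then the value lies in `F` and there is an optimal strategy pair with all
entries in `F`. -/
theorem matrix_game_ordered_field_property {m n : ℕ} (hm : 0 < m) (hn : 0 < n)
    (F : Subfield ℝ) (A : Matrix (Fin m) (Fin n) ℝ) (hA : ∀ i j, A i j ∈ F) :
    matrixVal A ∈ F ∧
    ∃ x0 ∈ stdSimplex ℝ (Fin m), ∃ y0 ∈ stdSimplex ℝ (Fin n),
      (∀ x ∈ stdSimplex ℝ (Fin m), payoff A x y0 ≤ payoff A x0 y0) ∧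
      (∀ y ∈ stdSimplex ℝ (Fin n), payoff A x0 y0 ≤ payoff A x0 y) ∧
      (∀ i, x0 i ∈ F) ∧ (∀ j, y0 j ∈ F) := by
  obtain ⟨x₀, hx₀, y₀, hy₀, v, hvF, hxv, hyv, hx₀F, hy₀F⟩ :=
    exists_optimal_strategies_mem_subfield hm hn F hA
  have hpay : payoff A x₀ y₀ = v :=
    le_antisymm (payoff_le_of_mulVec_le hx₀ hyv) (le_payoff_of_le_vecMul hy₀ hxv)
  have hmax : ∀ x ∈ stdSimplex ℝ (Fin m), payoff A x y₀ ≤ payoff A x₀ y₀ :=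
    fun x hx => hpay ▸ payoff_le_of_mulVec_le hx hyv
  have hmin : ∀ y ∈ stdSimplex ℝ (Fin n), payoff A x₀ y₀ ≤ payoff A x₀ y :=
    fun y hy => hpay ▸ le_payoff_of_le_vecMul hy hxv
  have hval : matrixVal A = v := (matrixVal_eq_payoff hx₀ hy₀ hmax hmin).trans hpay
  exact ⟨hval ▸ hvF, x₀, hx₀, y₀, hy₀, hmax, hmin, hx₀F, hy₀F⟩
end

section
/- Let A be an m×n real matrix game with val(A) ≠ 0. Then there exist nonempty index sets I ⊆ {1,…,m} and J ⊆ {1,…,n} with |I| = |J| such that the square submatrix Ā = A[I,J] is invertible and val(Ā) = val(A) = det(Ā) / (Σ_{i,j} Ā^{ij}) = (𝟏ᵀ Ā⁻¹ 𝟏)⁻¹, where Ā^{ij} denotes the (i,j)-th cofactor of Ā and 𝟏 is the all-ones vector. -/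
/-!
By the minimax theorem, proved here by separating the image of the column player's simplex from
an open orthant, the game has optimal strategies `x`, `y` with value `v`, and both may be taken to
be extreme points of the compact convex sets of optimal strategies. If `c` is supported on
`supp x` and `cᵀA` vanishes on the columns where `x` is tight, complementary slackness gives
`v ∑ cᵢ = cᵀ A y = 0`, so `∑ cᵢ = 0` as `v ≠ 0`, and then `x ± t c` is optimal for small `t`;
extremality forces `c = 0`. Hence the rows of `supp x`, restricted to the tight columns of `x`, are
linearly independent, and symmetrically for the columns of `supp y`. Independent rows and columns
extend to a nonsingular square submatrix `Ā` whose rows are tight for `y` and whose columns are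
tight for `x`. The restrictions of `x` and `y` are optimal in `Ā` with value `v`, and `Ā ȳ = v 𝟏`
gives `1 = 𝟏ᵀ ȳ = v 𝟏ᵀ Ā⁻¹ 𝟏`, while `Ā⁻¹ = adj Ā / det Ā`.
-/

open Matrix

open Filter Topology

theorem sum_comp_eq_of_support_subset {R ι ι' : Type*} [Fintype ι] [Fintype ι']
    [AddCommMonoid R] {f : ι → R} {ρ : ι' → ι} (hρ : ρ.Injective) (hf : f.support ⊆ Set.range ρ) :
    ∑ t, f (ρ t) = ∑ i, f i :=
  Fintype.sum_of_injective ρ hρ _ _ (fun _ hi => Function.notMem_support.1 fun h => hi (hf h))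
    fun _ => rfl

namespace Matrix

variable {K ι κ : Type*} [Field K]

theorem vecMul_submatrix_of_support_subset {R ι' κ' : Type*} [Fintype ι] [Fintype ι']
    [Semiring R] (A : Matrix ι κ R) {x : ι → R} {ρ : ι' → ι} (σ : κ' → κ) (hρ : ρ.Injective)
    (hx : x.support ⊆ Set.range ρ) : (x ∘ ρ) ᵥ* A.submatrix ρ σ = (x ᵥ* A) ∘ σ :=
  funext fun j => sum_comp_eq_of_support_subset (f := fun i => x i * A i (σ j)) hρ
    ((Function.support_mul_subset_left _ _).trans hx)

theorem submatrix_mulVec_of_support_subset {R ι' κ' : Type*} [Fintype κ] [Fintype κ']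
    [Semiring R] (A : Matrix ι κ R) {y : κ → R} (ρ : ι' → ι) {σ : κ' → κ} (hσ : σ.Injective)
    (hy : y.support ⊆ Set.range σ) : A.submatrix ρ σ *ᵥ (y ∘ σ) = (A *ᵥ y) ∘ ρ :=
  funext fun i => sum_comp_eq_of_support_subset (f := fun j => A (ρ i) j * y j) hσ
    ((Function.support_mul_subset_right _ _).trans hy)

theorem linearIndepOn_col_restrict_of_row_mem_span [Fintype κ] (M : Matrix ι κ K) {S : Set ι}
    {t : Set κ} (hS : ∀ i, M i ∈ Submodule.span K (M '' S)) (ht : LinearIndepOn K Mᵀ t) :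
    LinearIndepOn K (fun j (i : S) => M i j) t := by
  refine LinearIndependent.map (f := LinearMap.funLeft K K ((↑) : S → ι)) ht ?_
  rw [Submodule.disjoint_def]
  intro u hu hu0
  obtain ⟨a, rfl⟩ : u ∈ LinearMap.range M.mulVecLin := by
    rw [range_mulVecLin]
    exact Submodule.span_mono (Set.range_comp_subset_range _ _) hu
  ext i
  refine Submodule.span_induction (p := fun r _ => r ⬝ᵥ a = 0) ?_ (zero_dotProduct a)
    (fun r r' _ _ hr hr' => by rw [add_dotProduct, hr, hr', add_zero])
    (fun c r _ hr => by rw [smul_dotProduct, hr, smul_zero]) (hS i)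
  rintro _ ⟨s, hs, rfl⟩
  exact congrFun hu0 ⟨s, hs⟩

/-- Extend the rows `s` to a basis `S` of the row space and then the columns `t`, restricted to
`S`, to a basis `T` of the column space of `M[S, ·]`; both `M[S, T]` and its transpose then have
independent rows. -/
theorem exists_isUnit_det_submatrix_of_linearIndepOn [Fintype ι] [Fintype κ] (M : Matrix ι κ K)
    {s : Set ι} {t : Set κ} (hs : LinearIndepOn K M s) (ht : LinearIndepOn K Mᵀ t) :
    ∃ (k : ℕ) (ρ : Fin k → ι) (σ : Fin k → κ), ρ.Injective ∧ σ.Injective ∧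
      s ⊆ Set.range ρ ∧ t ⊆ Set.range σ ∧ IsUnit (M.submatrix ρ σ).det := by
  classical
  obtain ⟨S, -, hsS, hSspan, hSind⟩ := exists_linearIndepOn_extension hs (Set.subset_univ s)
  let N : Matrix S κ K := fun i j => M i j
  obtain ⟨T, -, htT, hTspan, hTind⟩ := exists_linearIndepOn_extension
    (M.linearIndepOn_col_restrict_of_row_mem_span
      (fun i => hSspan (Set.mem_image_of_mem _ (Set.mem_univ i))) ht) (Set.subset_univ t)
  let P : Matrix S T K := fun i j => M i j
  have hProws : LinearIndependent K P := linearIndepOn_univ_iff.1 <|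
    Nᵀ.linearIndepOn_col_restrict_of_row_mem_span
      (fun j => hTspan (Set.mem_image_of_mem _ (Set.mem_univ j))) (linearIndepOn_univ_iff.2 hSind)
  have hcard : Fintype.card S = Fintype.card T :=
    le_antisymm (by simpa using hProws.fintype_card_le_finrank)
      (by simpa using hTind.fintype_card_le_finrank)
  let eS : Fin (Fintype.card S) ≃ S := (Fintype.equivFin S).symm
  let eT : Fin (Fintype.card S) ≃ T := (Fintype.equivFinOfCardEq hcard.symm).symm
  refine ⟨_, (↑) ∘ eS, (↑) ∘ eT, Subtype.val_injective.comp eS.injective,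
    Subtype.val_injective.comp eT.injective, ?_, ?_, ?_⟩
  · rwa [EquivLike.range_comp _ eS, Subtype.range_coe]
  · rwa [EquivLike.range_comp _ eT, Subtype.range_coe]
  · rw [← isUnit_iff_isUnit_det, ← linearIndependent_rows_iff_isUnit]
    exact (hProws.comp eS eS.injective).map' (LinearEquiv.funCongrLeft K K eT).toLinearMap
      (LinearEquiv.ker _)

theorem exists_isUnit_det_submatrix_of_linearIndepOn_restrict [Fintype ι] [Fintype κ]
    (M : Matrix ι κ K) {I s : Set ι} {J t : Set κ} (hsI : s ⊆ I) (htJ : t ⊆ J)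
    (hs : LinearIndepOn K (fun i (j : J) => M i j) s)
    (ht : LinearIndepOn K (fun j (i : I) => M i j) t) :
    ∃ (k : ℕ) (ρ : Fin k → ι) (σ : Fin k → κ), ρ.Injective ∧ σ.Injective ∧
      s ⊆ Set.range ρ ∧ Set.range ρ ⊆ I ∧ t ⊆ Set.range σ ∧ Set.range σ ⊆ J ∧
      IsUnit (M.submatrix ρ σ).det := by
  classical
  obtain ⟨k, ρ, σ, hρ, hσ, hsρ, htσ, hdet⟩ :=
    exists_isUnit_det_submatrix_of_linearIndepOn (M.submatrix ((↑) : I → ι) ((↑) : J → κ))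
      (s := ((↑) : I → ι) ⁻¹' s) (t := ((↑) : J → κ) ⁻¹' t)
      ((hs.mono (Set.image_preimage_subset _ _)).comp_of_image Subtype.val_injective.injOn)
      ((ht.mono (Set.image_preimage_subset _ _)).comp_of_image Subtype.val_injective.injOn)
  refine ⟨k, (↑) ∘ ρ, (↑) ∘ σ, Subtype.val_injective.comp hρ, Subtype.val_injective.comp hσ,
    ?_, ?_, ?_, ?_, by rwa [submatrix_submatrix] at hdet⟩
  · intro i hi
    obtain ⟨r, hr⟩ := hsρ (show (⟨i, hsI hi⟩ : I) ∈ (↑) ⁻¹' s from hi)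
    exact ⟨r, congrArg Subtype.val hr⟩
  · rintro _ ⟨r, rfl⟩
    exact (ρ r).2
  · intro j hj
    obtain ⟨r, hr⟩ := htσ (show (⟨j, htJ hj⟩ : J) ∈ (↑) ⁻¹' t from hj)
    exact ⟨r, congrArg Subtype.val hr⟩
  · rintro _ ⟨r, rfl⟩
    exact (σ r).2

variable [Fintype ι] [DecidableEq ι]

theorem eq_inv_sum_inv_of_mulVec_eq_const {M : Matrix ι ι K} (hM : IsUnit M.det) {y : ι → K}
    {v : K} (hMy : M *ᵥ y = fun _ => v) (hy : ∑ i, y i = 1) : v = (∑ i, ∑ j, M⁻¹ i j)⁻¹ := by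
  have hinv : M⁻¹ *ᵥ (fun _ => v) = y := by
    rw [← hMy, mulVec_mulVec, nonsing_inv_mul M hM, one_mulVec]
  refine eq_inv_of_mul_eq_one_right ?_
  simp only [← hy, ← hinv, mulVec, dotProduct, Finset.sum_mul]

theorem det_div_sum_adjugate {M : Matrix ι ι K} (hM : M.det ≠ 0) :
    M.det / ∑ i, ∑ j, M.adjugate j i = (∑ i, ∑ j, M⁻¹ i j)⁻¹ := by
  have hadj : M.adjugate = M.det • M⁻¹ := by
    rw [inv_def, smul_smul, Ring.inverse_eq_inv', mul_inv_cancel₀ hM, one_smul]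
  simp only [hadj, smul_apply, smul_eq_mul, ← Finset.mul_sum]
  rw [Finset.sum_comm, div_mul_cancel_left₀ hM]

end Matrix

namespace MatrixGame

variable {ι κ : Type*} [Fintype ι]

theorem comp_mem_stdSimplex {ι' : Type*} [Fintype ι'] {x : ι → ℝ} (hx : x ∈ stdSimplex ℝ ι)
    {ρ : ι' → ι} (hρ : ρ.Injective) (hxρ : x.support ⊆ Set.range ρ) : x ∘ ρ ∈ stdSimplex ℝ ι' :=
  ⟨fun _ => hx.1 _, (sum_comp_eq_of_support_subset hρ hxρ).trans hx.2⟩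

theorem le_dotProduct_of_mem_stdSimplex {y w : ι → ℝ} {a : ℝ} (hy : y ∈ stdSimplex ℝ ι)
    (h : ∀ j, a ≤ w j) : a ≤ w ⬝ᵥ y :=
  calc a = ∑ j, a * y j := by rw [← Finset.mul_sum, hy.2, mul_one]
    _ ≤ w ⬝ᵥ y := Finset.sum_le_sum fun j _ => mul_le_mul_of_nonneg_right (h j) (hy.1 j)

theorem dotProduct_le_of_mem_stdSimplex {x w : ι → ℝ} {a : ℝ} (hx : x ∈ stdSimplex ℝ ι)
    (h : ∀ i, w i ≤ a) : x ⬝ᵥ w ≤ a :=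
  calc x ⬝ᵥ w ≤ ∑ i, x i * a :=
        Finset.sum_le_sum fun i _ => mul_le_mul_of_nonneg_left (h i) (hx.1 i)
    _ = a := by rw [← Finset.sum_mul, hx.2, one_mul]

theorem eq_of_le_dotProduct {x w : ι → ℝ} {a : ℝ} (hx : x ∈ stdSimplex ℝ ι)
    (hw : ∀ i, w i ≤ a) (ha : a ≤ x ⬝ᵥ w) {i : ι} (hi : x i ≠ 0) : w i = a := by
  have hterm : ∀ i ∈ Finset.univ, 0 ≤ x i * (a - w i) :=
    fun i _ => mul_nonneg (hx.1 i) (sub_nonneg.2 (hw i))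
  have hsum : ∑ i, x i * (a - w i) = a - x ⬝ᵥ w := by
    simp only [mul_sub, Finset.sum_sub_distrib, ← Finset.sum_mul, hx.2, one_mul, dotProduct]
  have hzero := (Finset.sum_eq_zero_iff_of_nonneg hterm).1
    (le_antisymm (hsum ▸ sub_nonpos.2 ha) (Finset.sum_nonneg hterm)) i (Finset.mem_univ i)
  linarith [(mul_eq_zero.1 hzero).resolve_left hi]

theorem nonneg_of_forall_dotProduct_lt {c : ι → ℝ} {w u : ℝ}
    (h : ∀ z : ι → ℝ, (∀ i, z i < w) → z ⬝ᵥ c < u) (i : ι) : 0 ≤ c i := by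
  classical
  by_contra! hci
  let z₀ : ι → ℝ := fun _ => w - 1
  have hz₀ := h z₀ fun _ => sub_one_lt w
  let s := (u - z₀ ⬝ᵥ c) / -c i
  have hs : 0 ≤ s := div_nonneg (sub_nonneg.2 hz₀.le) (neg_nonneg.2 hci.le)
  have := h (z₀ - Pi.single i s) fun j => by
    have : 0 ≤ (Pi.single i s : ι → ℝ) j := by
      by_cases hj : j = i <;> simp [hj, hs]
    simp only [Pi.sub_apply, z₀]
    linarith
  have hsc : s * c i = z₀ ⬝ᵥ c - u := by
    have := hci.ne
    simp only [s]
    field_simp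
    ring
  rw [sub_dotProduct, single_dotProduct, hsc] at this
  linarith

theorem mul_sum_le_of_forall_dotProduct_lt {c : ι → ℝ} {w u : ℝ}
    (h : ∀ z : ι → ℝ, (∀ i, z i < w) → z ⬝ᵥ c < u) (hc : 0 < ∑ i, c i) : w * ∑ i, c i ≤ u :=
  le_of_forall_sub_le fun ε hε => by
    have := h (fun _ => w - ε / ∑ i, c i) fun _ => sub_lt_self w (div_pos hε hc)
    rw [dotProduct, ← Finset.mul_sum, sub_mul, div_mul_cancel₀ _ hc.ne'] at this
    exact this.le

/-- A theorem of the alternative, from separating `K` from the open orthant below `w`. -/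
theorem exists_mem_stdSimplex_forall_le_dotProduct {K : Set (ι → ℝ)} (hKc : Convex ℝ K)
    (hKne : K.Nonempty) {w : ℝ} (hK : ∀ z ∈ K, ∃ i, w ≤ z i) :
    ∃ x ∈ stdSimplex ℝ ι, ∀ z ∈ K, w ≤ x ⬝ᵥ z := by
  classical
  have hUK : Disjoint (Set.univ.pi fun _ => Set.Iio w) K :=
    Set.disjoint_left.2 fun z hzU hzK => by
      obtain ⟨i, hi⟩ := hK z hzK
      exact (hzU i (Set.mem_univ i)).not_ge hi
  obtain ⟨f, u, hfU, hfK⟩ := geometric_hahn_banach_open (convex_pi fun _ _ => convex_Iio w)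
    (isOpen_set_pi Set.finite_univ fun _ _ => isOpen_Iio) hKc hUK
  let c : ι → ℝ := fun i => f fun j => if i = j then 1 else 0
  have hf : ∀ z, f z = z ⬝ᵥ c := fun z => f.toLinearMap.pi_apply_eq_sum_univ z
  have hU : ∀ z : ι → ℝ, (∀ i, z i < w) → z ⬝ᵥ c < u :=
    fun z hz => hf z ▸ hfU z fun i _ => hz i
  have hc := nonneg_of_forall_dotProduct_lt hU
  have hS : 0 < ∑ i, c i := by
    refine (Finset.sum_nonneg fun i _ => hc i).lt_of_ne fun hS => ?_
    have hc0 : c = 0 := funext fun i =>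
      (Finset.sum_eq_zero_iff_of_nonneg fun i _ => hc i).1 hS.symm i (Finset.mem_univ i)
    obtain ⟨z, hz⟩ := hKne
    have := (hU (fun _ => w - 1) fun _ => sub_one_lt w).trans_le (hfK z hz)
    rw [hf, hc0, dotProduct_zero, dotProduct_zero] at this
    exact this.false
  refine ⟨(∑ i, c i)⁻¹ • c, ⟨fun i => ?_, ?_⟩, fun z hz => ?_⟩
  · exact smul_nonneg (inv_nonneg.2 hS.le) (hc i)
  · simp only [Pi.smul_apply, smul_eq_mul, ← Finset.mul_sum, inv_mul_cancel₀ hS.ne']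
  · rw [smul_dotProduct, dotProduct_comm, ← hf, smul_eq_mul, le_inv_mul_iff₀ hS, mul_comm]
    exact (mul_sum_le_of_forall_dotProduct_lt hU hS).trans (hfK z hz)

def guaranteeing (A : Matrix ι κ ℝ) (v : ℝ) : Set (ι → ℝ) :=
  stdSimplex ℝ ι ∩ {x | ∀ j, v ≤ (x ᵥ* A) j}

theorem isCompact_guaranteeing {A : Matrix ι κ ℝ} {v : ℝ} : IsCompact (guaranteeing A v) :=
  (isCompact_stdSimplex ℝ ι).inter_right <| by
    simp only [Set.ofPred_forall]
    exact isClosed_iInter fun j => isClosed_le continuous_const (by fun_prop)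

variable [Fintype κ]

structure IsSaddlePoint (A : Matrix ι κ ℝ) (v : ℝ) (x : ι → ℝ) (y : κ → ℝ) : Prop where
  left_mem : x ∈ stdSimplex ℝ ι
  right_mem : y ∈ stdSimplex ℝ κ
  le_vecMul : ∀ j, v ≤ (x ᵥ* A) j
  mulVec_le : ∀ i, (A *ᵥ y) i ≤ v

theorem exists_isSaddlePoint [Nonempty ι] [Nonempty κ] (A : Matrix ι κ ℝ) :
    ∃ v x y, IsSaddlePoint A v x y := by
  classical
  let g : (κ → ℝ) → ℝ := fun y => Finset.univ.sup' Finset.univ_nonempty fun i => (A *ᵥ y) i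
  obtain ⟨y, hy, hmin⟩ := (isCompact_stdSimplex ℝ κ).exists_isMinOn
    ⟨_, single_mem_stdSimplex ℝ (Classical.arbitrary κ)⟩
    (by fun_prop : Continuous g).continuousOn
  obtain ⟨x, hx, hxK⟩ := exists_mem_stdSimplex_forall_le_dotProduct
    ((convex_stdSimplex ℝ κ).linear_image A.mulVecLin)
    ⟨_, Set.mem_image_of_mem _ hy⟩ (w := g y) <| by
      rintro _ ⟨y', hy', rfl⟩
      obtain ⟨i, -, hi⟩ := Finset.exists_mem_eq_sup' Finset.univ_nonempty fun i => (A *ᵥ y') i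
      exact ⟨i, (hmin hy').trans_eq hi⟩
  refine ⟨g y, x, y, hx, hy, fun j => ?_, fun i => Finset.le_sup' _ (Finset.mem_univ i)⟩
  have := hxK _ ⟨_, single_mem_stdSimplex ℝ j, rfl⟩
  rwa [mulVecLin_apply, dotProduct_mulVec, dotProduct_single, mul_one] at this

variable {A : Matrix ι κ ℝ} {v : ℝ} {x : ι → ℝ} {y : κ → ℝ}

theorem IsSaddlePoint.neg_transpose (h : IsSaddlePoint A v x y) :
    IsSaddlePoint (-Aᵀ) (-v) y x :=
  ⟨h.right_mem, h.left_mem,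
    fun i => by simpa [vecMul_neg, vecMul_transpose] using h.mulVec_le i,
    fun j => by simpa [neg_mulVec, mulVec_transpose] using h.le_vecMul j⟩

theorem IsSaddlePoint.mulVec_eq_of_ne_zero (h : IsSaddlePoint A v x y) {i : ι} (hi : x i ≠ 0) :
    (A *ᵥ y) i = v :=
  eq_of_le_dotProduct h.left_mem h.mulVec_le
    (by rw [dotProduct_mulVec]; exact le_dotProduct_of_mem_stdSimplex h.right_mem h.le_vecMul) hi

theorem IsSaddlePoint.vecMul_eq_of_ne_zero (h : IsSaddlePoint A v x y) {j : κ} (hj : y j ≠ 0) :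
    (x ᵥ* A) j = v := by
  simpa [neg_mulVec, mulVec_transpose] using h.neg_transpose.mulVec_eq_of_ne_zero hj

theorem IsSaddlePoint.matrixVal_eq {m n : ℕ} {A : Matrix (Fin m) (Fin n) ℝ} {v : ℝ}
    {x : Fin m → ℝ} {y : Fin n → ℝ} (h : IsSaddlePoint A v x y) : matrixVal A = v := by
  have : Nonempty (stdSimplex ℝ (Fin m)) := ⟨⟨x, h.left_mem⟩⟩
  have : Nonempty (stdSimplex ℝ (Fin n)) := ⟨⟨y, h.right_mem⟩⟩
  have hle : ∀ x' : stdSimplex ℝ (Fin m), ⨅ y' : stdSimplex ℝ (Fin n), payoff A x' y' ≤ v :=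
    fun x' => (ciInf_le (isCompact_range (by unfold payoff; fun_prop)).bddBelow
      ⟨y, h.right_mem⟩).trans (dotProduct_le_of_mem_stdSimplex x'.2 h.mulVec_le)
  refine le_antisymm (ciSup_le hle) ((le_ciInf fun y' => ?_).trans
    (le_ciSup ⟨v, Set.forall_mem_range.2 hle⟩ ⟨x, h.left_mem⟩))
  exact (le_dotProduct_of_mem_stdSimplex y'.2 h.le_vecMul).trans_eq (dotProduct_mulVec _ _ _).symm

theorem IsSaddlePoint.exists_extremePoints (h : IsSaddlePoint A v x y) :
    ∃ x' y', IsSaddlePoint A v x' y' ∧ x' ∈ (guaranteeing A v).extremePoints ℝ ∧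
      y' ∈ (guaranteeing (-Aᵀ) (-v)).extremePoints ℝ := by
  obtain ⟨x', hx'⟩ := isCompact_guaranteeing.extremePoints_nonempty ⟨x, h.left_mem, h.le_vecMul⟩
  obtain ⟨y', hy'⟩ := isCompact_guaranteeing.extremePoints_nonempty
    ⟨y, h.neg_transpose.left_mem, h.neg_transpose.le_vecMul⟩
  refine ⟨x', y', ⟨hx'.1.1, hy'.1.1, hx'.1.2, fun i => ?_⟩, hx', hy'⟩
  simpa [vecMul_neg, vecMul_transpose] using hy'.1.2 i

theorem eventually_add_smul_mem_guaranteeing (hx : x ∈ guaranteeing A v) {c : ι → ℝ}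
    (hc : ∀ i, x i = 0 → c i = 0) (hcA : ∀ j, (x ᵥ* A) j = v → (c ᵥ* A) j = 0)
    (hsum : ∑ i, c i = 0) : ∀ᶠ t : ℝ in 𝓝 0, x + t • c ∈ guaranteeing A v := by
  have hlt {a b : ℝ} (hab : a < b) (d : ℝ) : ∀ᶠ t : ℝ in 𝓝 0, a < b + t * d :=
    (Continuous.tendsto' (by fun_prop) 0 b (by simp)).eventually (lt_mem_nhds hab)
  have hnonneg : ∀ᶠ t : ℝ in 𝓝 0, ∀ i, 0 ≤ x i + t * c i := eventually_all.2 fun i => by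
    rcases (hx.1.1 i).eq_or_lt with hxi | hxi
    · exact .of_forall fun t => by simp [← hxi, hc i hxi.symm]
    · exact (hlt hxi (c i)).mono fun t => le_of_lt
  have hcols : ∀ᶠ t : ℝ in 𝓝 0, ∀ j, v ≤ (x ᵥ* A) j + t * (c ᵥ* A) j :=
    eventually_all.2 fun j => by
      rcases (hx.2 j).eq_or_lt with hxj | hxj
      · exact .of_forall fun t => by simp [← hxj, hcA j hxj.symm]
      · exact (hlt hxj _).mono fun t => le_of_lt
  filter_upwards [hnonneg, hcols] with t ht₁ ht₂
  refine ⟨⟨ht₁, ?_⟩, fun j => ?_⟩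
  · simp [Finset.sum_add_distrib, ← Finset.mul_sum, hsum, hx.1.2]
  · simpa [add_vecMul, smul_vecMul] using ht₂ j

theorem IsSaddlePoint.eq_zero_of_mem_extremePoints (h : IsSaddlePoint A v x y) (hv : v ≠ 0)
    (hx : x ∈ (guaranteeing A v).extremePoints ℝ) {c : ι → ℝ} (hc : ∀ i, x i = 0 → c i = 0)
    (hcA : ∀ j, (x ᵥ* A) j = v → (c ᵥ* A) j = 0) : c = 0 := by
  have hsum : ∑ i, c i = 0 := by
    refine (mul_eq_zero.1 ?_).resolve_left hv
    calc v * ∑ i, c i = c ⬝ᵥ (A *ᵥ y) := by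
          rw [Finset.mul_sum]
          refine Finset.sum_congr rfl fun i _ => ?_
          by_cases hxi : x i = 0
          · simp [hc i hxi]
          · rw [h.mulVec_eq_of_ne_zero hxi, mul_comm]
      _ = (c ᵥ* A) ⬝ᵥ y := dotProduct_mulVec c A y
      _ = 0 := Finset.sum_eq_zero fun j _ => by
          by_cases hyj : y j = 0
          · simp [hyj]
          · simp [hcA j (h.vecMul_eq_of_ne_zero hyj)]
  obtain ⟨ε, hε, hball⟩ :=
    Metric.eventually_nhds_iff.1 (eventually_add_smul_mem_guaranteeing hx.1 hc hcA hsum)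
  have hε' : |ε / 2| < ε := by rw [abs_of_pos (half_pos hε)]; exact half_lt_self hε
  have hplus := hball (y := ε / 2) (by rwa [Real.dist_0_eq_abs])
  have hminus := hball (y := -(ε / 2)) (by rwa [Real.dist_0_eq_abs, abs_neg])
  rw [neg_smul, ← sub_eq_add_neg] at hminus
  simpa [hε.ne'] using hx.2 hplus hminus (mem_openSegment_add_sub x _)

theorem IsSaddlePoint.linearIndepOn_of_mem_extremePoints (h : IsSaddlePoint A v x y)
    (hv : v ≠ 0) (hx : x ∈ (guaranteeing A v).extremePoints ℝ) {J : Set κ}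
    (hJ : {j | (x ᵥ* A) j = v} ⊆ J) : LinearIndepOn ℝ (fun i (j : J) => A i j) x.support := by
  rw [linearIndepOn_iff]
  intro l hl hl0
  refine DFunLike.coe_injective (h.eq_zero_of_mem_extremePoints hv hx (c := l) ?_ ?_)
  · exact fun i hi => (Finsupp.mem_supported' _ _).1 hl i (Function.notMem_support.2 hi)
  · intro j hj
    simpa [Finsupp.linearCombination_apply, Finsupp.sum_fintype, vecMul, dotProduct]
      using congrFun hl0 ⟨j, hJ hj⟩

theorem IsSaddlePoint.linearIndepOn_transpose_of_mem_extremePoints (h : IsSaddlePoint A v x y)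
    (hv : v ≠ 0) (hy : y ∈ (guaranteeing (-Aᵀ) (-v)).extremePoints ℝ) {I : Set ι}
    (hI : {i | (A *ᵥ y) i = v} ⊆ I) : LinearIndepOn ℝ (fun j (i : I) => A i j) y.support :=
  linearIndependent_neg_iff.1 <| h.neg_transpose.linearIndepOn_of_mem_extremePoints
    (neg_ne_zero.2 hv) hy fun i hi => hI (by simpa [vecMul_neg, vecMul_transpose] using hi)

end MatrixGame

open MatrixGame

/-- Part (K1) of the Shapley–Snow theorem: a matrix game with nonzero value has a
square invertible submatrix (a Shapley–Snow kernel) `Ā` with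
`val(Ā) = val(A) = det(Ā)/Σ_{ij} Ā^{ij} = (𝟏ᵀ Ā⁻¹ 𝟏)⁻¹`.
Here the `(i,j)`-th cofactor `Ā^{ij}` equals `adjugate Ā j i`. -/
theorem shapley_snow_K1 {m n : ℕ} (hm : 0 < m) (hn : 0 < n)
    (A : Matrix (Fin m) (Fin n) ℝ) (hval : matrixVal A ≠ 0) :
    ∃ (k : ℕ) (_ : 0 < k) (ρ : Fin k → Fin m) (σ : Fin k → Fin n),
      Function.Injective ρ ∧ Function.Injective σ ∧
      IsUnit (A.submatrix ρ σ).det ∧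
      matrixVal (A.submatrix ρ σ) = matrixVal A ∧
      matrixVal A =
        (A.submatrix ρ σ).det / (∑ i, ∑ j, (A.submatrix ρ σ).adjugate j i) ∧
      matrixVal A = (∑ i, ∑ j, (A.submatrix ρ σ)⁻¹ i j)⁻¹ := by
  have : Nonempty (Fin m) := ⟨⟨0, hm⟩⟩
  have : Nonempty (Fin n) := ⟨⟨0, hn⟩⟩
  obtain ⟨v, x₀, y₀, h₀⟩ := exists_isSaddlePoint A
  rw [h₀.matrixVal_eq] at hval ⊢
  obtain ⟨x, y, h, hx, hy⟩ := h₀.exists_extremePoints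
  obtain ⟨k, ρ, σ, hρ, hσ, hxρ, hρI, hyσ, hσJ, hdet⟩ :=
    A.exists_isUnit_det_submatrix_of_linearIndepOn_restrict
      (fun _ => h.mulVec_eq_of_ne_zero) (fun _ => h.vecMul_eq_of_ne_zero)
      (h.linearIndepOn_of_mem_extremePoints hval hx subset_rfl)
      (h.linearIndepOn_transpose_of_mem_extremePoints hval hy subset_rfl)
  have hxM : (x ∘ ρ) ᵥ* A.submatrix ρ σ = fun _ => v :=
    (vecMul_submatrix_of_support_subset A σ hρ hxρ).trans (funext fun t => hσJ ⟨t, rfl⟩)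
  have hyM : A.submatrix ρ σ *ᵥ (y ∘ σ) = fun _ => v :=
    (submatrix_mulVec_of_support_subset A ρ hσ hyσ).trans (funext fun t => hρI ⟨t, rfl⟩)
  have hxρΔ := comp_mem_stdSimplex h.left_mem hρ hxρ
  have hyσΔ := comp_mem_stdSimplex h.right_mem hσ hyσ
  have hk : 0 < k := Nat.pos_of_ne_zero <| by rintro rfl; simpa using hxρΔ.2
  have hv := eq_inv_sum_inv_of_mulVec_eq_const hdet hyM hyσΔ.2
  refine ⟨k, hk, ρ, σ, hρ, hσ, hdet, IsSaddlePoint.matrixVal_eq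
    ⟨hxρΔ, hyσΔ, fun t => (congrFun hxM t).ge, fun t => (congrFun hyM t).le⟩, ?_, hv⟩
  rw [det_div_sum_adjugate hdet.ne_zero, hv]
end

section
/- Let A be an n×n real matrix game that is completely mixed (every optimal strategy pair has all components strictly positive) and suppose val(A) ≠ 0. Then A is invertible and val(A) = (𝟏ᵀ A⁻¹ 𝟏)⁻¹, where 𝟏 ∈ ℝ^n is the all-ones vector. -/
/-!
By the minimax theorem there is an optimal pair `(x₀, y₀)`, and its payoff `v` is the value.
Complete mixedness makes `x₀` and `y₀` strictly positive, so complementary slackness gives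
`A y₀ = v 𝟏` and `x₀ᵀ A = v 𝟏ᵀ`. A kernel vector `z ≠ 0` of `A` would satisfy
`v 𝟏ᵀ z = x₀ᵀ A z = 0`; then `y₀ + t z` stays in the affine hull of the simplex, and for the
largest admissible `t` it is an optimal strategy with a zero coordinate. Hence `A` is invertible,
`y₀ = v A⁻¹ 𝟏`, and summing coordinates gives `1 = v 𝟏ᵀ A⁻¹ 𝟏`.
-/

open Matrix

/-- `(x0, y0)` is an optimal (saddle-point) strategy pair for the matrix game `A`. -/
def IsOptimalPair {m n : ℕ} (A : Matrix (Fin m) (Fin n) ℝ)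
    (x0 : Fin m → ℝ) (y0 : Fin n → ℝ) : Prop :=
  x0 ∈ stdSimplex ℝ (Fin m) ∧ y0 ∈ stdSimplex ℝ (Fin n) ∧
    (∀ x ∈ stdSimplex ℝ (Fin m), payoff A x y0 ≤ payoff A x0 y0) ∧
    (∀ y ∈ stdSimplex ℝ (Fin n), payoff A x0 y0 ≤ payoff A x0 y)

section Simplex

variable {ι : Type*} [Fintype ι]

lemma const_dotProduct_of_mem_stdSimplex {y : ι → ℝ} (a : ℝ) (hy : y ∈ stdSimplex ℝ ι) :
    (fun _ => a) ⬝ᵥ y = a := by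
  rw [dotProduct, ← Finset.mul_sum, hy.2, mul_one]

lemma eq_const_of_le_of_dotProduct_eq {c y : ι → ℝ} {a : ℝ} (hy : y ∈ stdSimplex ℝ ι)
    (hpos : ∀ i, 0 < y i) (hc : ∀ i, c i ≤ a) (h : c ⬝ᵥ y = a) : c = fun _ => a := by
  have hsum : ∑ i, (a - c i) * y i = 0 :=
    calc ∑ i, (a - c i) * y i = (fun _ => a) ⬝ᵥ y - c ⬝ᵥ y := by
          simp only [sub_mul, Finset.sum_sub_distrib, dotProduct]
      _ = 0 := by rw [const_dotProduct_of_mem_stdSimplex a hy, h, sub_self]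
  funext i
  have := (Finset.sum_eq_zero_iff_of_nonneg fun j _ =>
    mul_nonneg (sub_nonneg.2 (hc j)) (hy.1 j)).1 hsum i (Finset.mem_univ i)
  linarith [(mul_eq_zero.1 this).resolve_right (hpos i).ne']

lemma exists_nonneg_add_smul_eq_zero {y z : ι → ℝ} (hy : 0 ≤ y) (hz : ∃ j, z j < 0) :
    ∃ t : ℝ, 0 ≤ y + t • z ∧ ∃ j, (y + t • z) j = 0 := by
  obtain ⟨j₀, hj₀⟩ := hz
  obtain ⟨j, hj, hmin⟩ := Finset.exists_min_image {i | z i < 0} (fun i => y i / -z i)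
    ⟨j₀, by simpa using hj₀⟩
  rw [Finset.mem_filter_univ] at hj
  refine ⟨y j / -z j, fun i => ?_, j, ?_⟩
  · simp only [Pi.zero_apply, Pi.add_apply, Pi.smul_apply, smul_eq_mul]
    rcases lt_or_ge (z i) 0 with hi | hi
    · have := (le_div_iff₀ (neg_pos.2 hi)).1 (hmin i ((Finset.mem_filter_univ i).2 hi))
      linarith
    · have : 0 ≤ y j / -z j := div_nonneg (hy j) (neg_nonneg.2 hj.le)
      exact add_nonneg (hy i) (mul_nonneg this hi)
  · simp only [Pi.add_apply, Pi.smul_apply, smul_eq_mul]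
    field_simp [hj.ne]
    ring

end Simplex

section MatrixGame

variable {m n : ℕ} (A : Matrix (Fin m) (Fin n) ℝ)

lemma payoff_eq_toLinearMap₂' (x : Fin m → ℝ) (y : Fin n → ℝ) :
    payoff A x y = Matrix.toLinearMap₂' ℝ A x y :=
  (Matrix.toLinearMap₂'_apply' A x y).symm

lemma payoff_eq_vecMul_dotProduct (x : Fin m → ℝ) (y : Fin n → ℝ) :
    payoff A x y = (x ᵥ* A) ⬝ᵥ y :=
  dotProduct_mulVec x A y

lemma continuous_payoff_left (y : Fin n → ℝ) : Continuous fun x => payoff A x y := by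
  unfold payoff
  fun_prop

lemma continuous_payoff_right (x : Fin m → ℝ) : Continuous (payoff A x) := by
  unfold payoff
  fun_prop

/-- Von Neumann's minimax theorem. Sion's saddle points minimize in the first variable, hence
`f y x = payoff A x y`. -/
theorem exists_isOptimalPair (hm : 0 < m) (hn : 0 < n) : ∃ x0 y0, IsOptimalPair A x0 y0 := by
  have hΔ : ∀ k, 0 < k → (stdSimplex ℝ (Fin k)).Nonempty := fun k hk =>
    ⟨_, single_mem_stdSimplex ℝ ⟨0, hk⟩⟩
  obtain ⟨y0, hy0, x0, hx0, hsaddle⟩ :=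
    Sion.exists_isSaddlePointOn (f := fun y x => payoff A x y)
      (hΔ n hn) (convex_stdSimplex ℝ _) (isCompact_stdSimplex ℝ _)
      (fun x _ => (continuous_payoff_right A x).lowerSemicontinuous.lowerSemicontinuousOn _)
      (fun x _ => by
        simp only [payoff_eq_toLinearMap₂']
        exact ((Matrix.toLinearMap₂' ℝ A x).convexOn (convex_stdSimplex ℝ _)).quasiconvexOn)
      (convex_stdSimplex ℝ _) (hΔ m hm) (isCompact_stdSimplex ℝ _)
      (fun y _ => (continuous_payoff_left A y).upperSemicontinuous.upperSemicontinuousOn _)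
      (fun y _ => by
        simp only [payoff_eq_toLinearMap₂']
        exact (((Matrix.toLinearMap₂' ℝ A).flip y).concaveOn
          (convex_stdSimplex ℝ _)).quasiconcaveOn)
  exact ⟨x0, y0, hx0, hy0, fun x hx => hsaddle y0 hy0 x hx, fun y hy => hsaddle y hy x0 hx0⟩

variable {A} {x0 : Fin m → ℝ} {y0 : Fin n → ℝ}

theorem IsOptimalPair.matrixVal_eq (h : IsOptimalPair A x0 y0) :
    matrixVal A = payoff A x0 y0 := by
  obtain ⟨hx0, hy0, hleft, hright⟩ := h
  have : Nonempty (stdSimplex ℝ (Fin n)) := ⟨⟨y0, hy0⟩⟩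
  have hbdd (x : stdSimplex ℝ (Fin m)) :
      BddBelow (Set.range fun y : stdSimplex ℝ (Fin n) => payoff A x y) :=
    (isCompact_range ((continuous_payoff_right A x).comp continuous_subtype_val)).bddBelow
  have hinf (x : stdSimplex ℝ (Fin m)) :
      ⨅ y : stdSimplex ℝ (Fin n), payoff A x y ≤ payoff A x0 y0 :=
    (ciInf_le (hbdd x) ⟨y0, hy0⟩).trans (hleft x x.2)
  have hinf0 : ⨅ y : stdSimplex ℝ (Fin n), payoff A x0 y = payoff A x0 y0 :=
    le_antisymm (ciInf_le (hbdd ⟨x0, hx0⟩) ⟨y0, hy0⟩) (le_ciInf fun y => hright y y.2)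
  have : Nonempty (stdSimplex ℝ (Fin m)) := ⟨⟨x0, hx0⟩⟩
  exact le_antisymm (ciSup_le hinf)
    (hinf0 ▸ le_ciSup ⟨_, Set.forall_mem_range.2 hinf⟩ ⟨x0, hx0⟩)

lemma IsOptimalPair.mulVec_apply_le (h : IsOptimalPair A x0 y0) (i : Fin m) :
    (A *ᵥ y0) i ≤ payoff A x0 y0 := by
  simpa [payoff, single_dotProduct] using h.2.2.1 _ (single_mem_stdSimplex ℝ i)

lemma IsOptimalPair.le_vecMul_apply (h : IsOptimalPair A x0 y0) (j : Fin n) :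
    payoff A x0 y0 ≤ (x0 ᵥ* A) j := by
  simpa [payoff_eq_vecMul_dotProduct, dotProduct_single] using
    h.2.2.2 _ (single_mem_stdSimplex ℝ j)

lemma IsOptimalPair.mulVec_eq_const (h : IsOptimalPair A x0 y0) (hx0 : ∀ i, 0 < x0 i) :
    A *ᵥ y0 = fun _ => payoff A x0 y0 :=
  eq_const_of_le_of_dotProduct_eq h.1 hx0 h.mulVec_apply_le (dotProduct_comm _ _)

lemma IsOptimalPair.vecMul_eq_const (h : IsOptimalPair A x0 y0) (hy0 : ∀ j, 0 < y0 j) :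
    x0 ᵥ* A = fun _ => payoff A x0 y0 := by
  have := eq_const_of_le_of_dotProduct_eq (c := -(x0 ᵥ* A)) h.2.1 hy0
    (fun j => neg_le_neg (h.le_vecMul_apply j))
    (by rw [neg_dotProduct, ← payoff_eq_vecMul_dotProduct])
  funext j
  simpa using congrFun this j

lemma isOptimalPair_of_eq_const {v : ℝ} (hx0 : x0 ∈ stdSimplex ℝ (Fin m))
    (hy0 : y0 ∈ stdSimplex ℝ (Fin n)) (hxA : x0 ᵥ* A = fun _ => v)
    (hAy : A *ᵥ y0 = fun _ => v) : IsOptimalPair A x0 y0 := by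
  have hrow : ∀ y ∈ stdSimplex ℝ (Fin n), payoff A x0 y = v := fun y hy => by
    rw [payoff_eq_vecMul_dotProduct, hxA, const_dotProduct_of_mem_stdSimplex v hy]
  have hcol : ∀ x ∈ stdSimplex ℝ (Fin m), payoff A x y0 = v := fun x hx => by
    rw [payoff, hAy, dotProduct_comm, const_dotProduct_of_mem_stdSimplex v hx]
  refine ⟨hx0, hy0, fun x hx => ?_, fun y hy => ?_⟩
  · rw [hcol x hx, hcol x0 hx0]
  · rw [hrow y0 hy0, hrow y hy]

end MatrixGame

section SquareGame

variable {n : ℕ} {A : Matrix (Fin n) (Fin n) ℝ} {x0 y0 : Fin n → ℝ} {v : ℝ}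

lemma isUnit_det_of_eq_const (hv : v ≠ 0) (hy0 : y0 ∈ stdSimplex ℝ (Fin n))
    (hxA : x0 ᵥ* A = fun _ => v) (hAy : A *ᵥ y0 = fun _ => v)
    (hpos : ∀ y ∈ stdSimplex ℝ (Fin n), A *ᵥ y = (fun _ => v) → ∀ j, 0 < y j) :
    IsUnit A.det := by
  rw [isUnit_iff_ne_zero]
  intro hdet
  obtain ⟨z, hz, hAz⟩ := Matrix.exists_mulVec_eq_zero_iff.2 hdet
  have hsum : ∑ j, z j = 0 := by
    have : v * ∑ j, z j = 0 := by
      rw [Finset.mul_sum, ← dotProduct, ← hxA, ← dotProduct_mulVec, hAz, dotProduct_zero]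
    exact (mul_eq_zero.1 this).resolve_left hv
  have hneg : ∃ j, z j < 0 := by
    by_contra! hnonneg
    exact hz (funext fun j => (Finset.sum_eq_zero_iff_of_nonneg fun i _ => hnonneg i).1 hsum j
      (Finset.mem_univ j))
  obtain ⟨t, hnonneg, j, hj⟩ := exists_nonneg_add_smul_eq_zero hy0.1 hneg
  have hmem : y0 + t • z ∈ stdSimplex ℝ (Fin n) := by
    refine ⟨hnonneg, ?_⟩
    simp only [Pi.add_apply, Pi.smul_apply, smul_eq_mul, Finset.sum_add_distrib,
      ← Finset.mul_sum, hy0.2, hsum, mul_zero, add_zero]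
  have hA : A *ᵥ (y0 + t • z) = fun _ => v := by
    rw [mulVec_add, mulVec_smul, hAz, smul_zero, add_zero, hAy]
  exact (hpos _ hmem hA j).ne' hj

lemma eq_inv_sum_inv_of_mulVec_eq_const (hA : IsUnit A.det) (hy0 : y0 ∈ stdSimplex ℝ (Fin n))
    (hAy : A *ᵥ y0 = fun _ => v) : v = (∑ i, ∑ j, A⁻¹ i j)⁻¹ := by
  have hy0_eq : y0 = A⁻¹ *ᵥ fun _ => v := by
    rw [← hAy, mulVec_mulVec, nonsing_inv_mul A hA, one_mulVec]
  have : (∑ i, ∑ j, A⁻¹ i j) * v = 1 := by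
    rw [← hy0.2, hy0_eq, Finset.sum_mul]
    simp only [mulVec, dotProduct, Finset.sum_mul]
  exact eq_inv_of_mul_eq_one_right this

end SquareGame

/-- A completely mixed square matrix game with nonzero value is invertible and its
value satisfies `val(A) = (𝟏ᵀ A⁻¹ 𝟏)⁻¹`. -/
theorem completely_mixed_value_formula {n : ℕ} (hn : 0 < n)
    (A : Matrix (Fin n) (Fin n) ℝ)
    (hcm : ∀ x0 y0, IsOptimalPair A x0 y0 → (∀ i, 0 < x0 i) ∧ (∀ j, 0 < y0 j))
    (hval : matrixVal A ≠ 0) :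
    IsUnit A.det ∧ matrixVal A = (∑ i, ∑ j, A⁻¹ i j)⁻¹ := by
  obtain ⟨x0, y0, hopt⟩ := exists_isOptimalPair A hn hn
  obtain ⟨hx0_pos, hy0_pos⟩ := hcm x0 y0 hopt
  rw [hopt.matrixVal_eq] at hval ⊢
  have hAy := hopt.mulVec_eq_const hx0_pos
  have hxA := hopt.vecMul_eq_const hy0_pos
  have hdet : IsUnit A.det := isUnit_det_of_eq_const hval hopt.2.1 hxA hAy
    fun y hy hAy' => (hcm x0 y (isOptimalPair_of_eq_const hopt.1 hy hxA hAy')).2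
  exact ⟨hdet, eq_inv_sum_inv_of_mulVec_eq_const hdet hopt.2.1 hAy⟩
end

section
/- Consider a finite stochastic game with states s = 1,…,N, action sets {1,…,m_s} and {1,…,n_s} in state s, rewards r(s,a,b) ∈ ℝ, and transition probabilities p(s'|s,a,b) ≥ 0 with Σ_{s'=1}^N p(s'|s,a,b) = 1, and let β ∈ (0,1). Then there exists a unique vector v(β) ∈ ℝ^N satisfying v_s(β) = val[ R_β(s, v(β)) ] for every s = 1,…,N, where R_β(s,u) := [(1−β) r(s,a,b) + β Σ_{s'} p(s'|s,a,b) u_{s'}]_{a,b}. -/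
/-!
Each entry of `R_β(s, u)` depends on `u` only through a probability average scaled by `β`,
so it moves by at most `β ‖u - v‖_∞` when `u` is replaced by `v`. Every payoff `xᵀ A y` is an
average of entries of `A`, so if `A ≤ B + c` entrywise then `val A ≤ val B + c`; that is, the
value is `1`-Lipschitz for the entrywise sup distance. The Shapley operator is therefore a
`β`-contraction of `(ℝ^N, ‖·‖_∞)`, and Banach's fixed point theorem gives existence and uniqueness.
-/

open Matrix

/-- The auxiliary Shapley matrix game
`R_β(s,u) = [(1−β) r(s,a,b) + β Σ_{s'} p(s'|s,a,b) u_{s'}]_{a,b}`. -/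
noncomputable def shapleyMatrix {N : ℕ} {m n : Fin N → ℕ}
    (r : (s : Fin N) → Fin (m s) → Fin (n s) → ℝ)
    (p : (s : Fin N) → Fin (m s) → Fin (n s) → Fin N → ℝ)
    (β : ℝ) (s : Fin N) (u : Fin N → ℝ) : Matrix (Fin (m s)) (Fin (n s)) ℝ :=
  Matrix.of fun a b => (1 - β) * r s a b + β * ∑ s', p s a b s' * u s'

section ConditionallyComplete

variable {ι : Type*} [Nonempty ι] {f g : ι → ℝ} {c : ℝ}

theorem ciSup_le_ciSup_add (hg : BddAbove (Set.range g)) (h : ∀ i, f i ≤ g i + c) :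
    ⨆ i, f i ≤ (⨆ i, g i) + c :=
  ciSup_le fun i => (h i).trans (add_le_add_left (le_ciSup hg i) c)

theorem ciInf_le_ciInf_add (hf : BddBelow (Set.range f)) (h : ∀ i, f i ≤ g i + c) :
    ⨅ i, f i ≤ (⨅ i, g i) + c :=
  sub_le_iff_le_add.mp <| le_ciInf fun i => sub_le_iff_le_add.mpr <| (ciInf_le hf i).trans (h i)

end ConditionallyComplete

section MatrixGame

variable {m n : ℕ} {A B : Matrix (Fin m) (Fin n) ℝ} {x : Fin m → ℝ} {y : Fin n → ℝ} {c : ℝ}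

theorem payoff_eq_sum (A : Matrix (Fin m) (Fin n) ℝ) (x : Fin m → ℝ) (y : Fin n → ℝ) :
    payoff A x y = ∑ a, ∑ b, x a * A a b * y b := by
  simp only [payoff, dotProduct, mulVec, Finset.mul_sum, mul_assoc]

theorem payoff_le_payoff_add (h : ∀ a b, A a b ≤ B a b + c)
    (hx : x ∈ stdSimplex ℝ (Fin m)) (hy : y ∈ stdSimplex ℝ (Fin n)) :
    payoff A x y ≤ payoff B x y + c := by
  calc payoff A x y ≤ ∑ a, ∑ b, x a * (B a b + c) * y b := by
        rw [payoff_eq_sum]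
        gcongr with a _ b _
        exacts [hy.1 b, hx.1 a, h a b]
    _ = payoff B x y + c := by
        have hc : ∑ a, ∑ b, x a * c * y b = c := by
          simp only [← Finset.mul_sum, ← Finset.sum_mul, hx.2, hy.2, mul_one, one_mul]
        simp only [payoff_eq_sum, mul_add, add_mul, Finset.sum_add_distrib, hc]

theorem exists_abs_payoff_le (A : Matrix (Fin m) (Fin n) ℝ) :
    ∃ C, ∀ x ∈ stdSimplex ℝ (Fin m), ∀ y ∈ stdSimplex ℝ (Fin n), |payoff A x y| ≤ C := by
  obtain ⟨C, hC⟩ := (Set.finite_range fun ab : Fin m × Fin n => |A ab.1 ab.2|).bddAbove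
  have hAC : ∀ a b, |A a b| ≤ C := fun a b => hC ⟨(a, b), rfl⟩
  have h0 : ∀ x y, payoff (0 : Matrix (Fin m) (Fin n) ℝ) x y = 0 := fun x y => by
    simp [payoff]
  refine ⟨C, fun x hx y hy => abs_le.mpr ⟨?_, ?_⟩⟩
  · have := payoff_le_payoff_add (A := 0) (B := A) (c := C)
      (fun a b => by rw [Matrix.zero_apply]; linarith [neg_abs_le (A a b), hAC a b]) hx hy
    linarith [h0 x y]
  · have := payoff_le_payoff_add (A := A) (B := 0) (c := C)
      (fun a b => by rw [Matrix.zero_apply, zero_add]; exact (le_abs_self _).trans (hAC a b)) hx hy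
    linarith [h0 x y]

theorem matrixVal_le_matrixVal_add [Nonempty (Fin m)] [Nonempty (Fin n)]
    (h : ∀ a b, A a b ≤ B a b + c) : matrixVal A ≤ matrixVal B + c := by
  obtain ⟨CA, hCA⟩ := exists_abs_payoff_le A
  obtain ⟨CB, hCB⟩ := exists_abs_payoff_le B
  have hA : ∀ x : stdSimplex ℝ (Fin m),
      BddBelow (Set.range fun y : stdSimplex ℝ (Fin n) => payoff A x y) := fun x =>
    ⟨-CA, Set.forall_mem_range.mpr fun y => neg_le_of_abs_le (hCA x x.2 y y.2)⟩
  have hB : BddAbove (Set.range fun x : stdSimplex ℝ (Fin m) =>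
      ⨅ y : stdSimplex ℝ (Fin n), payoff B x y) := by
    obtain ⟨y₀⟩ : Nonempty (stdSimplex ℝ (Fin n)) := inferInstance
    refine ⟨CB, Set.forall_mem_range.mpr fun x => ?_⟩
    have hx : BddBelow (Set.range fun y : stdSimplex ℝ (Fin n) => payoff B x y) :=
      ⟨-CB, Set.forall_mem_range.mpr fun y => neg_le_of_abs_le (hCB x x.2 y y.2)⟩
    exact (ciInf_le hx y₀).trans (le_of_abs_le (hCB x x.2 y₀ y₀.2))
  exact ciSup_le_ciSup_add hB fun x =>
    ciInf_le_ciInf_add (hA x) fun y => payoff_le_payoff_add h x.2 y.2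

theorem abs_matrixVal_sub_le [Nonempty (Fin m)] [Nonempty (Fin n)]
    (h : ∀ a b, |A a b - B a b| ≤ c) : |matrixVal A - matrixVal B| ≤ c := by
  refine abs_sub_le_iff.mpr ⟨?_, ?_⟩ <;> rw [sub_le_iff_le_add']
  · exact matrixVal_le_matrixVal_add fun a b => by linarith [(abs_sub_le_iff.mp (h a b)).1]
  · exact matrixVal_le_matrixVal_add fun a b => by linarith [(abs_sub_le_iff.mp (h a b)).2]

end MatrixGame

section Shapley

variable {N : ℕ} {m n : Fin N → ℕ} {r : (s : Fin N) → Fin (m s) → Fin (n s) → ℝ}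
  {p : (s : Fin N) → Fin (m s) → Fin (n s) → Fin N → ℝ} {β : ℝ}

noncomputable def shapleyOperator (r : (s : Fin N) → Fin (m s) → Fin (n s) → ℝ)
    (p : (s : Fin N) → Fin (m s) → Fin (n s) → Fin N → ℝ) (β : ℝ) (u : Fin N → ℝ) :
    Fin N → ℝ :=
  fun s => matrixVal (shapleyMatrix r p β s u)

theorem abs_shapleyMatrix_sub_le (hp : ∀ s a b s', 0 ≤ p s a b s')
    (hp1 : ∀ s a b, ∑ s', p s a b s' = 1) (hβ : 0 ≤ β) (u v : Fin N → ℝ) (s : Fin N)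
    (a : Fin (m s)) (b : Fin (n s)) :
    |shapleyMatrix r p β s u a b - shapleyMatrix r p β s v a b| ≤ β * dist u v := by
  have hdiff : shapleyMatrix r p β s u a b - shapleyMatrix r p β s v a b
      = β * ∑ s', p s a b s' * (u s' - v s') := by
    simp only [shapleyMatrix, of_apply, mul_sub, Finset.sum_sub_distrib]
    ring
  rw [hdiff, abs_mul, abs_of_nonneg hβ]
  gcongr
  calc |∑ s', p s a b s' * (u s' - v s')| ≤ ∑ s', p s a b s' * |u s' - v s'| := by
        refine (Finset.abs_sum_le_sum_abs _ _).trans_eq ?_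
        simp only [abs_mul, abs_of_nonneg (hp s a b _)]
    _ ≤ ∑ s', p s a b s' * dist u v := by
        gcongr with s' _
        exacts [hp s a b s', dist_le_pi_dist u v s']
    _ = dist u v := by rw [← Finset.sum_mul, hp1, one_mul]

theorem lipschitzWith_shapleyOperator (hm : ∀ s, 0 < m s) (hn : ∀ s, 0 < n s)
    (hp : ∀ s a b s', 0 ≤ p s a b s') (hp1 : ∀ s a b, ∑ s', p s a b s' = 1) (hβ : 0 ≤ β) :
    LipschitzWith ⟨β, hβ⟩ (shapleyOperator r p β) := by
  refine LipschitzWith.of_dist_le_mul fun u v => (dist_pi_le_iff (by positivity)).mpr fun s => ?_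
  have : Nonempty (Fin (m s)) := Fin.pos_iff_nonempty.mp (hm s)
  have : Nonempty (Fin (n s)) := Fin.pos_iff_nonempty.mp (hn s)
  exact abs_matrixVal_sub_le (abs_shapleyMatrix_sub_le hp hp1 hβ u v s)

end Shapley

theorem shapley_fixed_point_exists_unique_general {N : ℕ} (m n : Fin N → ℕ)
    (hm : ∀ s, 0 < m s) (hn : ∀ s, 0 < n s)
    (r : (s : Fin N) → Fin (m s) → Fin (n s) → ℝ)
    (p : (s : Fin N) → Fin (m s) → Fin (n s) → Fin N → ℝ)
    (hp : ∀ s a b s', 0 ≤ p s a b s') (hp1 : ∀ s a b, ∑ s', p s a b s' = 1)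
    (β : ℝ) (hβ : β ∈ Set.Ioo (0 : ℝ) 1) :
    ∃! v : Fin N → ℝ, ∀ s, v s = matrixVal (shapleyMatrix r p β s v) := by
  have hT : ContractingWith ⟨β, hβ.1.le⟩ (shapleyOperator r p β) :=
    ⟨hβ.2, lipschitzWith_shapleyOperator hm hn hp hp1 hβ.1.le⟩
  refine ⟨hT.fixedPoint, fun s => congrFun hT.fixedPoint_isFixedPt.symm s, fun v hv => ?_⟩
  exact hT.fixedPoint_unique (funext fun s => (hv s).symm)

/-- Shapley's theorem: for every discount factor `β ∈ (0,1)` there is a unique vector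
`v(β)` with `v_s(β) = val[R_β(s, v(β))]` for all states `s`. -/
theorem shapley_fixed_point_exists_unique {N : ℕ} (hN : 0 < N) (m n : Fin N → ℕ)
    (hm : ∀ s, 0 < m s) (hn : ∀ s, 0 < n s)
    (r : (s : Fin N) → Fin (m s) → Fin (n s) → ℝ)
    (p : (s : Fin N) → Fin (m s) → Fin (n s) → Fin N → ℝ)
    (hp : ∀ s a b s', 0 ≤ p s a b s') (hp1 : ∀ s a b, ∑ s', p s a b s' = 1)
    (β : ℝ) (hβ : β ∈ Set.Ioo (0 : ℝ) 1) :
    ∃! v : Fin N → ℝ, ∀ s, v s = matrixVal (shapleyMatrix r p β s v) :=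
  shapley_fixed_point_exists_unique_general m n hm hn r p hp hp1 β hβ
end
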